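/- arXiv:2411.15636 — 3 statements merged into one kernel-verified Lean document; each statement's English description precedes it below -/
import Mathlib

section
/- Let T₁ = [[A₁, B₁],[C₁, D₁]] and T₂ = [[A₂, B₂],[C₂, D₂]] be bounded operators on H = M ⊕ M⊥ and λ > 0. If T₂ satisfies the left condition (A₂ + C₂)(B_M) ⊆ λ(B₂ + D₂)(B_{M⊥}), then the product T₁T₂ also satisfies ((A₁A₂ + B₁C₂) + (C₁A₂ + D₁C₂))(B_M) ⊆ λ((A₁B₂ + B₁D₂) + (C₁B₂ + D₁D₂))(B_{M⊥}); that is, the left condition is preserved under left multiplication by any bounded operator. -/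
open ContinuousLinearMap

variable {H : Type*} [NormedAddCommGroup H] [InnerProductSpace ℂ H] [CompleteSpace H]

/-- The left condition `(A+C)(B_M) ⊆ λ(B+D)(B_{M⊥})` is preserved under left
multiplication: if `T₂` satisfies it, so does `T₁ T₂` (blockwise products). -/
theorem stmt6 (M : Submodule ℂ H)
    (A₁ A₂ : M →L[ℂ] M) (B₁ B₂ : Mᗮ →L[ℂ] M) (C₁ C₂ : M →L[ℂ] Mᗮ) (D₁ D₂ : Mᗮ →L[ℂ] Mᗮ)
    (l : ℝ) (hl : 0 < l)
    (h₂ : ∀ x : M, ‖x‖ ≤ 1 → ∃ y : Mᗮ, ‖y‖ ≤ 1 ∧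
      ((A₂ x : H) + (C₂ x : H)) = (l : ℂ) • ((B₂ y : H) + (D₂ y : H))) :
    ∀ x : M, ‖x‖ ≤ 1 → ∃ y : Mᗮ, ‖y‖ ≤ 1 ∧
      (((A₁.comp A₂ + B₁.comp C₂) x : H) + ((C₁.comp A₂ + D₁.comp C₂) x : H)) =
        (l : ℂ) • (((A₁.comp B₂ + B₁.comp D₂) y : H) + ((C₁.comp B₂ + D₁.comp D₂) y : H)) := by
  intro x hx
  obtain ⟨y, hy, hxy⟩ := h₂ x hx
  refine ⟨y, hy, ?_⟩
  have hdiff : (A₂ x : H) - (l : ℂ) • (B₂ y : H)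
      = (l : ℂ) • (D₂ y : H) - (C₂ x : H) := by
    rw [smul_add] at hxy
    exact sub_eq_sub_iff_add_eq_add.mpr (hxy.trans (add_comm _ _))
  have hmemM : (A₂ x : H) - (l : ℂ) • (B₂ y : H) ∈ M :=
    M.sub_mem (A₂ x).2 (M.smul_mem _ (B₂ y).2)
  have hmemMo : (A₂ x : H) - (l : ℂ) • (B₂ y : H) ∈ Mᗮ := by
    rw [hdiff]
    exact Mᗮ.sub_mem (Mᗮ.smul_mem _ (D₂ y).2) (C₂ x).2
  have hzero : (A₂ x : H) - (l : ℂ) • (B₂ y : H) = 0 :=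
    (Submodule.disjoint_def.mp M.orthogonal_disjoint) _ hmemM hmemMo
  have hA : A₂ x = (l : ℂ) • B₂ y := by
    apply Subtype.ext
    have := sub_eq_zero.mp hzero
    simpa using this
  have hC : C₂ x = (l : ℂ) • D₂ y := by
    apply Subtype.ext
    have h0 : (l : ℂ) • (D₂ y : H) - (C₂ x : H) = 0 := hdiff ▸ hzero
    have := (sub_eq_zero.mp h0).symm
    simpa using this
  simp only [add_apply, comp_apply, hA, hC, map_smul, Submodule.coe_add,
    Submodule.coe_smul, smul_add]
end

section
/- Let T = [[A,B],[C,D]] and T_n = [[A_n, B_n],[C_n, D_n]] be bounded operators from H to K relative to closed subspaces M ⊆ H and N ⊆ K, with T_n → T in operator norm. Suppose each T_n satisfies C_n(B_M) ⊆ λ_n D_n(B_{M⊥}) and B_n*(B_N) ⊆ λ_n D_n*(B_{N⊥}) for positive reals λ_n with λ_n‖D − D_n‖ → 0, and suppose R(D) is closed. Then R(C) ⊆ R(D) and R(B*) ⊆ R(D*); that is, T is (M,N)-complementable. -/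
open ContinuousLinearMap Filter

open scoped ComplexInnerProductSpace


lemma range_subset_of_approx {E F G : Type*} [NormedAddCommGroup E] [NormedSpace ℂ E]
    [NormedAddCommGroup F] [NormedSpace ℂ F] [NormedAddCommGroup G] [NormedSpace ℂ G]
    (Cn : ℕ → E →L[ℂ] G) (C : E →L[ℂ] G) (Dn : ℕ → F →L[ℂ] G) (D : F →L[ℂ] G)
    (hC : Tendsto (fun n => ‖C - Cn n‖) atTop (nhds 0))
    (lam : ℕ → ℝ) (hpos : ∀ n, 0 < lam n)
    (hcompl : ∀ n, ∀ x : E, ‖x‖ ≤ 1 → ∃ y : F, ‖y‖ ≤ 1 ∧ Cn n x = ((lam n : ℝ) : ℂ) • Dn n y)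
    (hlam : Tendsto (fun n => lam n * ‖D - Dn n‖) atTop (nhds 0))
    (hclosed : IsClosed (Set.range D)) : Set.range C ⊆ Set.range D := by
  have key : ∀ x : E, ‖x‖ ≤ 1 → C x ∈ Set.range D := by
    intro x hx
    choose y hy hxy using fun n => hcompl n x hx
    set z : ℕ → G := fun n => D (((lam n : ℝ) : ℂ) • y n) with hz
    have hmem : ∀ n, z n ∈ Set.range D := fun n => ⟨_, rfl⟩
    have hbound : ∀ n, ‖z n - C x‖ ≤ ‖C - Cn n‖ + lam n * ‖D - Dn n‖ := by
      intro n
      have h1 : ‖C x - Cn n x‖ ≤ ‖C - Cn n‖ := by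
        calc ‖C x - Cn n x‖ = ‖(C - Cn n) x‖ := by simp
        _ ≤ ‖C - Cn n‖ * ‖x‖ := le_opNorm _ _
        _ ≤ ‖C - Cn n‖ * 1 := by gcongr
        _ = ‖C - Cn n‖ := mul_one _
      have h2 : ‖Cn n x - z n‖ ≤ lam n * ‖D - Dn n‖ := by
        rw [hxy n, hz]
        have heq : ((lam n : ℝ) : ℂ) • Dn n (y n) - D (((lam n : ℝ) : ℂ) • y n)
            = ((lam n : ℝ) : ℂ) • ((Dn n - D) (y n)) := by
          simp [smul_sub, map_smul]
        rw [heq, norm_smul]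
        have : ‖((lam n : ℝ) : ℂ)‖ = lam n := by
          rw [Complex.norm_real, Real.norm_eq_abs, abs_of_pos (hpos n)]
        rw [this]
        have hle : ‖(Dn n - D) (y n)‖ ≤ ‖D - Dn n‖ := by
          calc ‖(Dn n - D) (y n)‖ ≤ ‖Dn n - D‖ * ‖y n‖ := le_opNorm _ _
          _ ≤ ‖Dn n - D‖ * 1 := by gcongr; exact hy n
          _ = ‖D - Dn n‖ := by rw [mul_one, norm_sub_rev]
        exact mul_le_mul_of_nonneg_left hle (hpos n).le
      calc ‖z n - C x‖ = ‖(C x - Cn n x) + (Cn n x - z n)‖ := by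
            rw [norm_sub_rev]; congr 1; abel
      _ ≤ ‖C x - Cn n x‖ + ‖Cn n x - z n‖ := norm_add_le _ _
      _ ≤ ‖C - Cn n‖ + lam n * ‖D - Dn n‖ := add_le_add h1 h2
    have hzero : Tendsto (fun n => ‖z n - C x‖) atTop (nhds 0) := by
      have := hC.add hlam
      rw [add_zero] at this
      exact squeeze_zero (fun n => norm_nonneg _) hbound this
    have hlim : Tendsto z atTop (nhds (C x)) :=
      tendsto_iff_norm_sub_tendsto_zero.2 hzero
    exact hclosed.mem_of_tendsto hlim (Eventually.of_forall hmem)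
  rintro _ ⟨x, rfl⟩
  rcases eq_or_ne x 0 with rfl | hx
  · exact ⟨0, by simp⟩
  · have hnx : (‖x‖ : ℂ) ≠ 0 := by
      simpa using norm_ne_zero_iff.2 hx
    have h1 : ‖(‖x‖ : ℂ)⁻¹ • x‖ ≤ 1 := by
      rw [norm_smul, norm_inv, Complex.norm_real, Real.norm_eq_abs, abs_norm]
      rw [inv_mul_cancel₀ (norm_ne_zero_iff.2 hx)]
    obtain ⟨w, hw⟩ := key ((‖x‖ : ℂ)⁻¹ • x) h1
    refine ⟨(‖x‖ : ℂ) • w, ?_⟩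
    rw [map_smul, hw, map_smul, smul_smul, mul_inv_cancel₀ hnx, one_smul]


lemma isClosed_range_adjoint {F G : Type*} [NormedAddCommGroup F] [InnerProductSpace ℂ F]
    [CompleteSpace F] [NormedAddCommGroup G] [InnerProductSpace ℂ G] [CompleteSpace G]
    (D : F →L[ℂ] G) (h : IsClosed (Set.range D)) : IsClosed (Set.range (adjoint D)) := by
  set V : Submodule ℂ F := (LinearMap.ker (D : F →ₗ[ℂ] G))ᗮ with hV
  haveI : CompleteSpace (LinearMap.ker (D : F →ₗ[ℂ] G)) := (ContinuousLinearMap.isClosed_ker D).completeSpace_coe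
  haveI : CompleteSpace V := (Submodule.isClosed_orthogonal _).completeSpace_coe
  set E : Submodule ℂ G := LinearMap.range (D : F →ₗ[ℂ] G) with hE
  have hEclosed : IsClosed (E : Set G) := by rwa [hE, LinearMap.coe_range]
  haveI : CompleteSpace E := hEclosed.completeSpace_coe
  -- D applied to the projection equals D
  have hDP : ∀ u : F, D ((Submodule.orthogonalProjectionOnto V u : F)) = D u := by
    intro u
    have hVV : Vᗮ = LinearMap.ker (D : F →ₗ[ℂ] G) :=
      Submodule.orthogonal_orthogonal (𝕜 := ℂ) (K := LinearMap.ker (D : F →ₗ[ℂ] G))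
    have hsub : u - (Submodule.orthogonalProjectionOnto V u : F) ∈ LinearMap.ker (D : F →ₗ[ℂ] G) :=
      (SetLike.ext_iff.1 hVV _).1 (V.sub_starProjection_mem_orthogonal u)
    have h0 : D (u - (Submodule.orthogonalProjectionOnto V u : F)) = 0 := hsub
    rw [map_sub, sub_eq_zero] at h0
    exact h0.symm
  set D' : V →L[ℂ] E :=
    (D.comp V.subtypeL).codRestrict E (fun v => LinearMap.mem_range_self _ _) with hD'
  have hinj : LinearMap.ker (D' : V →ₗ[ℂ] E) = ⊥ := by
    rw [LinearMap.ker_eq_bot']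
    intro v hv
    have hDv : D (v : F) = 0 := congrArg Subtype.val hv
    have hker : (v : F) ∈ LinearMap.ker (D : F →ₗ[ℂ] G) := hDv
    have : ⟪(v : F), (v : F)⟫ = 0 :=
      Submodule.inner_right_of_mem_orthogonal hker v.2
    exact Subtype.ext (inner_self_eq_zero.1 this)
  have hsurj : LinearMap.range (D' : V →ₗ[ℂ] E) = ⊤ := by
    rw [LinearMap.range_eq_top]
    rintro ⟨w, hw⟩
    obtain ⟨u, hu⟩ := hw
    refine ⟨Submodule.orthogonalProjectionOnto V u, ?_⟩
    apply Subtype.ext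
    show D ((Submodule.orthogonalProjectionOnto V u : F)) = w
    rw [hDP u]; exact hu
  set e := ContinuousLinearEquiv.ofBijective D' hinj hsurj with he
  have hrange : Set.range (adjoint D) = (V : Set F) := by
    ext x
    constructor
    · rintro ⟨ybar, rfl⟩
      rw [hV]
      intro u hu
      rw [ContinuousLinearMap.adjoint_inner_right]
      have : D u = 0 := hu
      rw [this, inner_zero_left]
    · intro hx
      set x' : V := ⟨x, hx⟩ with hx'
      set w : E := adjoint (e.symm : E →L[ℂ] V) x' with hwdef
      refine ⟨(w : G), ?_⟩
      apply ext_inner_left ℂ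
      intro u
      rw [ContinuousLinearMap.adjoint_inner_right]
      have hDu : D u = ((e (Submodule.orthogonalProjectionOnto V u) : E) : G) := by
        rw [he, ContinuousLinearEquiv.coeFn_ofBijective]
        show D u = D ((Submodule.orthogonalProjectionOnto V u : F))
        rw [hDP u]
      rw [hDu]
      rw [show ⟪((e (Submodule.orthogonalProjectionOnto V u) : E) : G), (w : G)⟫
          = ⟪e (Submodule.orthogonalProjectionOnto V u), w⟫ from rfl]
      rw [hwdef, ContinuousLinearMap.adjoint_inner_right]
      rw [show ((e.symm : E →L[ℂ] V) (e (Submodule.orthogonalProjectionOnto V u))) =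
          Submodule.orthogonalProjectionOnto V u from e.symm_apply_apply _]
      rw [show ⟪(Submodule.orthogonalProjectionOnto V u : V), x'⟫
          = ⟪((Submodule.orthogonalProjectionOnto V u : V) : F), x⟫ from rfl]
      have hperp : ⟪u - (Submodule.orthogonalProjectionOnto V u : F), x⟫ = 0 :=
        Submodule.inner_left_of_mem_orthogonal hx
          (V.sub_starProjection_mem_orthogonal u)
      have hsub0 : ⟪u, x⟫ - ⟪((Submodule.orthogonalProjectionOnto V u : V) : F), x⟫ = 0 := by
        rw [← inner_sub_left]; exact hperp
      exact (sub_eq_zero.1 hsub0).symm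
  rw [hrange]
  exact Submodule.isClosed_orthogonal _


lemma proj_comp_norm_le {H K : Type*} [NormedAddCommGroup H] [InnerProductSpace ℂ H]
    [NormedAddCommGroup K] [InnerProductSpace ℂ K]
    (P : Submodule ℂ H) (Q : Submodule ℂ K) [Q.HasOrthogonalProjection] (R : H →L[ℂ] K) :
    ‖(Submodule.orthogonalProjectionOnto Q).comp (R.comp P.subtypeL)‖ ≤ ‖R‖ := by
  have h1 : ‖R.comp P.subtypeL‖ ≤ ‖R‖ := by
    calc ‖R.comp P.subtypeL‖ ≤ ‖R‖ * ‖P.subtypeL‖ := opNorm_comp_le _ _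
    _ ≤ ‖R‖ * 1 := by gcongr; exact Submodule.norm_subtypeL_le P
    _ = ‖R‖ := mul_one _
  calc ‖(Submodule.orthogonalProjectionOnto Q).comp (R.comp P.subtypeL)‖
      ≤ ‖Submodule.orthogonalProjectionOnto Q‖ * ‖R.comp P.subtypeL‖ := opNorm_comp_le _ _
    _ ≤ 1 * ‖R‖ := mul_le_mul (Submodule.orthogonalProjectionOnto_norm_le Q) h1 (by positivity) zero_le_one
    _ = ‖R‖ := one_mul _

variable {H K : Type*} [NormedAddCommGroup H] [InnerProductSpace ℂ H] [CompleteSpace H]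
  [NormedAddCommGroup K] [InnerProductSpace ℂ K] [CompleteSpace K]

/-- The (1,1)-block `A = P_N T P_M : M → N` of `T` relative to `H = M ⊕ M⊥`, `K = N ⊕ N⊥`. -/
noncomputable def blkA (M : Submodule ℂ H) (N : Submodule ℂ K) [CompleteSpace M]
    [CompleteSpace N] (T : H →L[ℂ] K) : M →L[ℂ] N :=
  (Submodule.orthogonalProjectionOnto N).comp (T.comp (Submodule.subtypeL M))

/-- The (1,2)-block `B = P_N T P_{M⊥} : M⊥ → N`. -/
noncomputable def blkB (M : Submodule ℂ H) (N : Submodule ℂ K) [CompleteSpace M]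
    [CompleteSpace N] (T : H →L[ℂ] K) : Mᗮ →L[ℂ] N :=
  (Submodule.orthogonalProjectionOnto N).comp (T.comp (Submodule.subtypeL Mᗮ))

/-- The (2,1)-block `C = P_{N⊥} T P_M : M → N⊥`. -/
noncomputable def blkC (M : Submodule ℂ H) (N : Submodule ℂ K) [CompleteSpace M]
    [CompleteSpace N] (T : H →L[ℂ] K) : M →L[ℂ] Nᗮ :=
  (Submodule.orthogonalProjectionOnto Nᗮ).comp (T.comp (Submodule.subtypeL M))

/-- The (2,2)-block `D = P_{N⊥} T P_{M⊥} : M⊥ → N⊥`. -/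
noncomputable def blkD (M : Submodule ℂ H) (N : Submodule ℂ K) [CompleteSpace M]
    [CompleteSpace N] (T : H →L[ℂ] K) : Mᗮ →L[ℂ] Nᗮ :=
  (Submodule.orthogonalProjectionOnto Nᗮ).comp (T.comp (Submodule.subtypeL Mᗮ))

set_option maxHeartbeats 1000000 in
set_option synthInstance.maxHeartbeats 200000 in
/-- If `T_n → T` in operator norm, each `T_n` is `(M,N,λ_n)`-complementable
(`C_n(B_M) ⊆ λ_n D_n(B_{M⊥})` and `B_n*(B_N) ⊆ λ_n D_n*(B_{N⊥})`),
`λ_n ‖D - D_n‖ → 0` and `R(D)` is closed, then `R(C) ⊆ R(D)` and `R(B*) ⊆ R(D*)`,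
i.e. `T` is `(M,N)`-complementable. -/
theorem stmt12 (M : Submodule ℂ H) (N : Submodule ℂ K) [CompleteSpace M] [CompleteSpace N]
    (Tn : ℕ → H →L[ℂ] K) (T : H →L[ℂ] K)
    (hconv : Filter.Tendsto Tn Filter.atTop (nhds T))
    (lam : ℕ → ℝ) (hpos : ∀ n, 0 < lam n)
    (hcompl : ∀ n, ∀ x : M, ‖x‖ ≤ 1 → ∃ y : Mᗮ, ‖y‖ ≤ 1 ∧
      blkC M N (Tn n) x = ((lam n : ℝ) : ℂ) • blkD M N (Tn n) y)
    (hcompl' : ∀ n, ∀ x : N, ‖x‖ ≤ 1 → ∃ y : Nᗮ, ‖y‖ ≤ 1 ∧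
      adjoint (blkB M N (Tn n)) x = ((lam n : ℝ) : ℂ) • adjoint (blkD M N (Tn n)) y)
    (hlam : Filter.Tendsto (fun n => lam n * ‖blkD M N T - blkD M N (Tn n)‖)
      Filter.atTop (nhds 0))
    (hclosed : IsClosed (Set.range (blkD M N T))) :
    Set.range (blkC M N T) ⊆ Set.range (blkD M N T) ∧
      Set.range (adjoint (blkB M N T)) ⊆ Set.range (adjoint (blkD M N T)) := by
  have hTnorm : Tendsto (fun n => ‖T - Tn n‖) atTop (nhds 0) := by
    have h0 := tendsto_iff_norm_sub_tendsto_zero.1 hconv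
    simpa [norm_sub_rev] using h0
  have hCsub : ∀ n, blkC M N T - blkC M N (Tn n) = blkC M N (T - Tn n) := by
    intro n; ext v; simp [blkC]
  have hBsub : ∀ n, blkB M N T - blkB M N (Tn n) = blkB M N (T - Tn n) := by
    intro n; ext v; simp [blkB]
  have hCconv : Tendsto (fun n => ‖blkC M N T - blkC M N (Tn n)‖) atTop (nhds 0) := by
    refine squeeze_zero (fun n => by positivity)
      (fun n => by rw [hCsub n]; exact proj_comp_norm_le _ _ _) hTnorm
  have hBconv : Tendsto (fun n => ‖adjoint (blkB M N T) - adjoint (blkB M N (Tn n))‖)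
      atTop (nhds 0) := by
    have heq : ∀ n, ‖adjoint (blkB M N T) - adjoint (blkB M N (Tn n))‖
        = ‖blkB M N T - blkB M N (Tn n)‖ := by
      intro n
      rw [show adjoint (blkB M N T) - adjoint (blkB M N (Tn n))
          = adjoint (blkB M N T - blkB M N (Tn n)) from
        (LinearIsometryEquiv.map_sub _ _ _).symm]
      exact LinearIsometryEquiv.norm_map _ _
    refine squeeze_zero (fun n => by positivity) (fun n => ?_) hTnorm
    rw [heq n, hBsub n]
    exact proj_comp_norm_le _ _ _
  have hlam' : Tendsto (fun n => lam n * ‖adjoint (blkD M N T) - adjoint (blkD M N (Tn n))‖)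
      atTop (nhds 0) := by
    have heq : ∀ n, ‖adjoint (blkD M N T) - adjoint (blkD M N (Tn n))‖
        = ‖blkD M N T - blkD M N (Tn n)‖ := by
      intro n
      rw [show adjoint (blkD M N T) - adjoint (blkD M N (Tn n))
          = adjoint (blkD M N T - blkD M N (Tn n)) from
        (LinearIsometryEquiv.map_sub _ _ _).symm]
      exact LinearIsometryEquiv.norm_map _ _
    simpa [heq] using hlam
  have hclosed' : IsClosed (Set.range (adjoint (blkD M N T))) :=
    isClosed_range_adjoint _ hclosed
  constructor
  · exact range_subset_of_approx (fun n => blkC M N (Tn n)) (blkC M N T)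
      (fun n => blkD M N (Tn n)) (blkD M N T) hCconv lam hpos hcompl hlam hclosed
  · exact range_subset_of_approx (fun n => adjoint (blkB M N (Tn n))) (adjoint (blkB M N T))
      (fun n => adjoint (blkD M N (Tn n))) (adjoint (blkD M N T)) hBconv lam hpos hcompl'
      hlam' hclosed'
end

section
/- The set ψ(M,N,λ) of (M,N,λ)-complementable operators is closed in the subspace BC_D(M,N) of bounded operators whose (2,2)-block has closed range; that is, if T ∈ BC_D(M,N) is a norm limit of a sequence in ψ(M,N,λ), then T ∈ ψ(M,N,λ). In particular, if K is finite-dimensional, then ψ(M,N,λ) is a norm-closed subset of B(H,K). -/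
open ContinuousLinearMap Filter

section AuxHilbert

variable {E F : Type*} [NormedAddCommGroup E] [InnerProductSpace ℂ E] [CompleteSpace E]
  [NormedAddCommGroup F] [InnerProductSpace ℂ F] [CompleteSpace F]

private lemma aux_fact (D : E →L[ℂ] F) (y : E) :
    D y = D (((LinearMap.ker (D : E →ₗ[ℂ] F))ᗮ).subtypeL (Submodule.orthogonalProjectionOnto (LinearMap.ker (D : E →ₗ[ℂ] F))ᗮ y)) := by
  haveI : CompleteSpace (LinearMap.ker (D : E →ₗ[ℂ] F)) := (isClosed_ker D).completeSpace_coe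
  have h1 : y - Submodule.orthogonalProjectionOnto (LinearMap.ker (D : E →ₗ[ℂ] F))ᗮ y ∈ (LinearMap.ker (D : E →ₗ[ℂ] F))ᗮᗮ :=
    Submodule.sub_starProjection_mem_orthogonal y
  rw [Submodule.orthogonal_orthogonal] at h1
  have h2 : D (y - Submodule.orthogonalProjectionOnto (LinearMap.ker (D : E →ₗ[ℂ] F))ᗮ y) = 0 := h1
  have h3 := sub_eq_zero.mp (by rw [map_sub] at h2; exact h2)
  simpa using h3

private noncomputable def theEquiv (D : E →L[ℂ] F) (hD : IsClosed (Set.range D)) :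
    ((LinearMap.ker (D : E →ₗ[ℂ] F))ᗮ) ≃L[ℂ] (LinearMap.range (D : E →ₗ[ℂ] F)) := by
  haveI : CompleteSpace (LinearMap.range (D : E →ₗ[ℂ] F)) := by
    change IsClosed ((LinearMap.range (D : E →ₗ[ℂ] F) : Set F)) at hD
    exact hD.completeSpace_coe
  refine ContinuousLinearEquiv.ofBijective
    ((D.comp ((LinearMap.ker (D : E →ₗ[ℂ] F))ᗮ).subtypeL).codRestrict (LinearMap.range (D : E →ₗ[ℂ] F))
      (fun u => LinearMap.mem_range_self _ _)) ?_ ?_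
  · rw [LinearMap.ker_eq_bot']
    intro u hu
    have h0 : D u.1 = 0 := congrArg Subtype.val hu
    have hmem : (u : E) ∈ LinearMap.ker (D : E →ₗ[ℂ] F) := h0
    have horth := u.2
    rw [Submodule.mem_orthogonal] at horth
    ext
    exact inner_self_eq_zero.mp (horth u.1 h0)
  · rw [LinearMap.range_eq_top]
    rintro ⟨z, y, rfl⟩
    exact ⟨Submodule.orthogonalProjectionOnto (LinearMap.ker (D : E →ₗ[ℂ] F))ᗮ y, Subtype.ext (aux_fact D y).symm⟩

private lemma theEquiv_apply (D : E →L[ℂ] F) (hD : IsClosed (Set.range D))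
    (u : (LinearMap.ker (D : E →ₗ[ℂ] F))ᗮ) : ((theEquiv D hD) u : F) = D u.1 := rfl

lemma isClosed_image_closedBall (D : E →L[ℂ] F) (hD : IsClosed (Set.range D)) :
    IsClosed (⇑D '' Metric.closedBall 0 1) := by
  have key : ⇑D '' Metric.closedBall 0 1 =
      Subtype.val '' (⇑(theEquiv D hD) '' Metric.closedBall 0 1) := by
    ext z
    constructor
    · rintro ⟨y, hy, rfl⟩
      refine ⟨theEquiv D hD (Submodule.orthogonalProjectionOnto (LinearMap.ker (D : E →ₗ[ℂ] F))ᗮ y), ⟨_, ?_, rfl⟩, ?_⟩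
      · rw [Metric.mem_closedBall, dist_zero_right] at hy ⊢
        calc ‖Submodule.orthogonalProjectionOnto (LinearMap.ker (D : E →ₗ[ℂ] F))ᗮ y‖
            ≤ ‖Submodule.orthogonalProjectionOnto (LinearMap.ker (D : E →ₗ[ℂ] F))ᗮ‖ * ‖y‖ := le_opNorm _ _
          _ ≤ 1 * ‖y‖ := by gcongr; exact Submodule.orthogonalProjectionOnto_norm_le _
          _ ≤ 1 := by simpa using hy
      · rw [theEquiv_apply]; exact (aux_fact D y).symm
    · rintro ⟨w, ⟨u, hu, rfl⟩, rfl⟩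
      refine ⟨u.1, ?_, (theEquiv_apply D hD u).symm⟩
      rw [Metric.mem_closedBall, dist_zero_right] at hu ⊢
      exact hu
  rw [key]
  have h1 : IsClosed (⇑(theEquiv D hD) '' Metric.closedBall 0 1) :=
    (theEquiv D hD).toHomeomorph.isClosedMap _ Metric.isClosed_closedBall
  have h2 : IsClosed ((LinearMap.range (D : E →ₗ[ℂ] F) : Submodule ℂ F) : Set F) := by
    change IsClosed ((LinearMap.range (D : E →ₗ[ℂ] F) : Set F)) at hD; exact hD
  exact (h2.isClosedEmbedding_subtypeVal.isClosedMap) _ h1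

local notation "⟪" x ", " y "⟫" => @inner ℂ _ _ x y

private noncomputable def AA (D : E →L[ℂ] F) (hD : IsClosed (Set.range D)) :
    ((LinearMap.ker (D : E →ₗ[ℂ] F))ᗮ) →L[ℂ] (LinearMap.range (D : E →ₗ[ℂ] F)) := theEquiv D hD

private noncomputable def SS (D : E →L[ℂ] F) (hD : IsClosed (Set.range D)) :
    (LinearMap.range (D : E →ₗ[ℂ] F)) →L[ℂ] ((LinearMap.ker (D : E →ₗ[ℂ] F))ᗮ) := (theEquiv D hD).symm

private lemma AA_apply (D : E →L[ℂ] F) (hD : IsClosed (Set.range D))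
    (u : (LinearMap.ker (D : E →ₗ[ℂ] F))ᗮ) : ((AA D hD u : LinearMap.range (D : E →ₗ[ℂ] F)) : F) = D u.1 := rfl

private lemma adjoint_coe_eq (D : E →L[ℂ] F) [CompleteSpace (LinearMap.range (D : E →ₗ[ℂ] F))]
    (hD : IsClosed (Set.range D)) (w : LinearMap.range (D : E →ₗ[ℂ] F)) :
    ContinuousLinearMap.adjoint D (w : F) =
      ((ContinuousLinearMap.adjoint (AA D hD) w : (LinearMap.ker (D : E →ₗ[ℂ] F))ᗮ) : E) := by
  apply ext_inner_right ℂ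
  intro v
  set P := Submodule.orthogonalProjectionOnto (LinearMap.ker (D : E →ₗ[ℂ] F))ᗮ
  have h1 : ⟪ContinuousLinearMap.adjoint D (w : F), v⟫ = ⟪(w : F), D v⟫ :=
    ContinuousLinearMap.adjoint_inner_left D _ _
  have h2 : D v = (AA D hD (P v) : F) := by
    rw [AA_apply]; exact aux_fact D v
  have h3 : ⟪(w : F), (AA D hD (P v) : F)⟫ = ⟪w, AA D hD (P v)⟫ :=
    (Submodule.coe_inner _ _ _).symm
  have h4 : ⟪w, AA D hD (P v)⟫ = ⟪ContinuousLinearMap.adjoint (AA D hD) w, P v⟫ :=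
    (ContinuousLinearMap.adjoint_inner_left (AA D hD) _ _).symm
  have h5 : ⟪ContinuousLinearMap.adjoint (AA D hD) w, P v⟫ =
      ⟪((ContinuousLinearMap.adjoint (AA D hD) w : (LinearMap.ker (D : E →ₗ[ℂ] F))ᗮ) : E),
        ((P v : (LinearMap.ker (D : E →ₗ[ℂ] F))ᗮ) : E)⟫ := Submodule.coe_inner _ _ _
  have h6 : ⟪((ContinuousLinearMap.adjoint (AA D hD) w : (LinearMap.ker (D : E →ₗ[ℂ] F))ᗮ) : E),
      v - ((P v : (LinearMap.ker (D : E →ₗ[ℂ] F))ᗮ) : E)⟫ = 0 := by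
    have hv : v - ((P v : (LinearMap.ker (D : E →ₗ[ℂ] F))ᗮ) : E) ∈ ((LinearMap.ker (D : E →ₗ[ℂ] F))ᗮ)ᗮ :=
      Submodule.sub_starProjection_mem_orthogonal v
    rw [Submodule.mem_orthogonal] at hv
    exact hv _ (ContinuousLinearMap.adjoint (AA D hD) w).2
  have h7 : ⟪((ContinuousLinearMap.adjoint (AA D hD) w : (LinearMap.ker (D : E →ₗ[ℂ] F))ᗮ) : E), v⟫ =
      ⟪((ContinuousLinearMap.adjoint (AA D hD) w : (LinearMap.ker (D : E →ₗ[ℂ] F))ᗮ) : E),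
        ((P v : (LinearMap.ker (D : E →ₗ[ℂ] F))ᗮ) : E)⟫ := by
    have h8 := inner_sub_right (𝕜 := ℂ)
      ((ContinuousLinearMap.adjoint (AA D hD) w : (LinearMap.ker (D : E →ₗ[ℂ] F))ᗮ) : E) v
      ((P v : (LinearMap.ker (D : E →ₗ[ℂ] F))ᗮ) : E)
    rw [h6] at h8
    linear_combination -h8
  rw [h1, h2, h3, h4, h5, h7]

lemma isClosed_range_adjoint_s19 (D : E →L[ℂ] F) (hD : IsClosed (Set.range D)) :
    IsClosed (Set.range (ContinuousLinearMap.adjoint D)) := by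
  haveI : CompleteSpace (LinearMap.range (D : E →ₗ[ℂ] F)) := by
    change IsClosed ((LinearMap.range (D : E →ₗ[ℂ] F) : Set F)) at hD; exact hD.completeSpace_coe
  have hrange : Set.range (ContinuousLinearMap.adjoint D) = ((LinearMap.ker (D : E →ₗ[ℂ] F))ᗮ : Set E) := by
    apply Set.Subset.antisymm
    · rintro _ ⟨z, rfl⟩
      rw [SetLike.mem_coe, Submodule.mem_orthogonal]
      intro u hu
      have hu0 : D u = 0 := hu
      rw [ContinuousLinearMap.adjoint_inner_right, hu0, inner_zero_left]
    · intro u hu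
      have hSA : (SS D hD).comp (AA D hD) = ContinuousLinearMap.id ℂ _ := by
        ext u
        simp [SS, AA]
      have hadj : (ContinuousLinearMap.adjoint (AA D hD)).comp
          (ContinuousLinearMap.adjoint (SS D hD)) = ContinuousLinearMap.id ℂ _ := by
        rw [← ContinuousLinearMap.adjoint_comp, hSA, ContinuousLinearMap.adjoint_id]
      refine ⟨((ContinuousLinearMap.adjoint (SS D hD) ⟨u, hu⟩ : LinearMap.range (D : E →ₗ[ℂ] F)) : F), ?_⟩
      rw [adjoint_coe_eq D hD]
      have h2 : ContinuousLinearMap.adjoint (AA D hD)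
          (ContinuousLinearMap.adjoint (SS D hD) ⟨u, hu⟩) = ⟨u, hu⟩ := by
        rw [← ContinuousLinearMap.comp_apply, hadj]
        rfl
      rw [h2]
  rw [hrange]
  exact Submodule.isClosed_orthogonal _

/-- The abstract limit argument: if `Cₙ x = λ • Dₙ (yₙ)` with `‖yₙ‖ ≤ 1`, `Cₙ → C`,
`Dₙ → D` and `D` has closed range, then `C x = λ • D y'` for some `y'` in the ball. -/
lemma psi_limit {X Y Z : Type*} [NormedAddCommGroup X] [InnerProductSpace ℂ X]
    [CompleteSpace X] [NormedAddCommGroup Y] [InnerProductSpace ℂ Y] [CompleteSpace Y]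
    [NormedAddCommGroup Z] [InnerProductSpace ℂ Z] [CompleteSpace Z]
    (lamC : ℂ) (hlamC : lamC ≠ 0)
    (C : X →L[ℂ] Z) (D : Y →L[ℂ] Z) (Cn : ℕ → X →L[ℂ] Z) (Dn : ℕ → Y →L[ℂ] Z)
    (ε : ℕ → ℝ) (hε : Tendsto ε atTop (nhds 0))
    (hC : ∀ n, ‖C - Cn n‖ ≤ ε n) (hD : ∀ n, ‖D - Dn n‖ ≤ ε n)
    (hDrange : IsClosed (Set.range D))
    (x : X) (hx : ‖x‖ ≤ 1) (y : ℕ → Y) (hy : ∀ n, ‖y n‖ ≤ 1)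
    (heq : ∀ n, Cn n x = lamC • Dn n (y n)) :
    ∃ y' : Y, ‖y'‖ ≤ 1 ∧ C x = lamC • D y' := by
  have hmem : lamC⁻¹ • C x ∈ ⇑D '' Metric.closedBall 0 1 := by
    have hball : ∀ n, D (y n) ∈ ⇑D '' Metric.closedBall 0 1 := fun n =>
      ⟨y n, by simpa [Metric.mem_closedBall, dist_zero_right] using hy n, rfl⟩
    have ht : Tendsto (fun n => D (y n)) atTop (nhds (lamC⁻¹ • C x)) := by
      rw [tendsto_iff_norm_sub_tendsto_zero]
      refine squeeze_zero (fun n => norm_nonneg _)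
        (g := fun n => (1 + ‖lamC⁻¹‖) * ε n) ?_ ?_
      · intro n
        have hεn : (0 : ℝ) ≤ ε n := (norm_nonneg _).trans (hD n)
        have e1 : Dn n (y n) = lamC⁻¹ • Cn n x := by
          rw [heq n, inv_smul_smul₀ hlamC]
        have e2 : D (y n) - lamC⁻¹ • C x
            = (D (y n) - Dn n (y n)) + lamC⁻¹ • (Cn n x - C x) := by
          rw [smul_sub, ← e1]; abel
        have b1 : ‖D (y n) - Dn n (y n)‖ ≤ ε n := by
          rw [← ContinuousLinearMap.sub_apply]
          calc ‖(D - Dn n) (y n)‖ ≤ ‖D - Dn n‖ * ‖y n‖ := le_opNorm _ _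
            _ ≤ ε n * 1 := mul_le_mul (hD n) (hy n) (norm_nonneg _) hεn
            _ = ε n := mul_one _
        have b2 : ‖lamC⁻¹ • (Cn n x - C x)‖ ≤ ‖lamC⁻¹‖ * ε n := by
          rw [norm_smul, ← ContinuousLinearMap.sub_apply]
          refine mul_le_mul_of_nonneg_left ?_ (norm_nonneg _)
          calc ‖(Cn n - C) x‖ ≤ ‖Cn n - C‖ * ‖x‖ := le_opNorm _ _
            _ ≤ ε n * 1 := by
                refine mul_le_mul ?_ hx (norm_nonneg _) hεn
                rw [norm_sub_rev]; exact hC n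
            _ = ε n := mul_one _
        calc ‖D (y n) - lamC⁻¹ • C x‖
            = ‖(D (y n) - Dn n (y n)) + lamC⁻¹ • (Cn n x - C x)‖ := by rw [e2]
          _ ≤ ‖D (y n) - Dn n (y n)‖ + ‖lamC⁻¹ • (Cn n x - C x)‖ := norm_add_le _ _
          _ ≤ ε n + ‖lamC⁻¹‖ * ε n := add_le_add b1 b2
          _ = (1 + ‖lamC⁻¹‖) * ε n := by ring
      · simpa using hε.const_mul (1 + ‖lamC⁻¹‖)
    exact (isClosed_image_closedBall D hDrange).mem_of_tendsto ht (Eventually.of_forall hball)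
  obtain ⟨y', hy', hEq⟩ := hmem
  refine ⟨y', by simpa [Metric.mem_closedBall, dist_zero_right] using hy', ?_⟩
  rw [hEq, smul_inv_smul₀ hlamC]

end AuxHilbert

variable {H K : Type*} [NormedAddCommGroup H] [InnerProductSpace ℂ H] [CompleteSpace H]
  [NormedAddCommGroup K] [InnerProductSpace ℂ K] [CompleteSpace K]

/-- The set `ψ(M,N,λ)` of `(M,N,λ)`-complementable operators. -/
def psiSet (M : Submodule ℂ H) (N : Submodule ℂ K) [CompleteSpace M] [CompleteSpace N]
    (lam : ℝ) : Set (H →L[ℂ] K) :=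
  {T | (∀ x : M, ‖x‖ ≤ 1 → ∃ y : Mᗮ, ‖y‖ ≤ 1 ∧
          blkC M N T x = ((lam : ℝ) : ℂ) • blkD M N T y) ∧
       (∀ x : N, ‖x‖ ≤ 1 → ∃ y : Nᗮ, ‖y‖ ≤ 1 ∧
          ContinuousLinearMap.adjoint (blkB M N T) x =
            ((lam : ℝ) : ℂ) • ContinuousLinearMap.adjoint (blkD M N T) y)}

lemma blk_opNorm_le (U : Submodule ℂ H) (V : Submodule ℂ K) [CompleteSpace V]
    (S : H →L[ℂ] K) :
    ‖(Submodule.orthogonalProjectionOnto V).comp (S.comp (Submodule.subtypeL U))‖ ≤ ‖S‖ := by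
  refine opNorm_le_bound _ (norm_nonneg S) fun x => ?_
  calc ‖Submodule.orthogonalProjectionOnto V (S (U.subtypeL x))‖
      ≤ ‖Submodule.orthogonalProjectionOnto V‖ * ‖S (U.subtypeL x)‖ := le_opNorm _ _
    _ ≤ 1 * ‖S (U.subtypeL x)‖ := by gcongr; exact Submodule.orthogonalProjectionOnto_norm_le _
    _ = ‖S ((x : H))‖ := by rw [one_mul]; rfl
    _ ≤ ‖S‖ * ‖(x : H)‖ := le_opNorm _ _
    _ = ‖S‖ * ‖x‖ := rfl

lemma blk_sub (U : Submodule ℂ H) (V : Submodule ℂ K) [CompleteSpace V]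
    (S T : H →L[ℂ] K) :
    (Submodule.orthogonalProjectionOnto V).comp ((S - T).comp (Submodule.subtypeL U)) =
      (Submodule.orthogonalProjectionOnto V).comp (S.comp (Submodule.subtypeL U)) -
        (Submodule.orthogonalProjectionOnto V).comp (T.comp (Submodule.subtypeL U)) := by
  ext x
  simp

/-- `ψ(M,N,λ)` is closed within the set of operators whose `(2,2)`-block has closed
range: a norm limit of operators in `ψ(M,N,λ)` whose `D`-block has closed range lies in
`ψ(M,N,λ)`.  In particular, if `K` is finite-dimensional then `ψ(M,N,λ)` is a closed
subset of `B(H,K)`. -/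
theorem stmt19 (M : Submodule ℂ H) (N : Submodule ℂ K) [CompleteSpace M] [CompleteSpace N]
    (lam : ℝ) (hlam : 0 < lam) :
    (∀ T : H →L[ℂ] K, T ∈ closure (psiSet M N lam) →
        IsClosed (Set.range (blkD M N T)) → T ∈ psiSet M N lam) ∧
      (FiniteDimensional ℂ K → IsClosed (psiSet M N lam)) := by
  have hlamC : ((lam : ℝ) : ℂ) ≠ 0 := Complex.ofReal_ne_zero.mpr hlam.ne'
  have main : ∀ T : H →L[ℂ] K, T ∈ closure (psiSet M N lam) →
      IsClosed (Set.range (blkD M N T)) → T ∈ psiSet M N lam := by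
    intro T hT hDT
    obtain ⟨u, hu, hul⟩ := mem_closure_iff_seq_limit.mp hT
    have hε : Tendsto (fun n => ‖u n - T‖) atTop (nhds 0) :=
      tendsto_iff_norm_sub_tendsto_zero.mp hul
    have hCsub : ∀ n, ‖blkC M N T - blkC M N (u n)‖ ≤ ‖u n - T‖ := by
      intro n
      have h1 : blkC M N T - blkC M N (u n) = blkC M N (T - u n) := by
        simp only [blkC]; exact (blk_sub _ _ _ _).symm
      rw [h1, norm_sub_rev (u n) T]
      simpa only [blkC] using blk_opNorm_le M Nᗮ (T - u n)
    have hDsub : ∀ n, ‖blkD M N T - blkD M N (u n)‖ ≤ ‖u n - T‖ := by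
      intro n
      have h1 : blkD M N T - blkD M N (u n) = blkD M N (T - u n) := by
        simp only [blkD]; exact (blk_sub _ _ _ _).symm
      rw [h1, norm_sub_rev (u n) T]
      simpa only [blkD] using blk_opNorm_le Mᗮ Nᗮ (T - u n)
    have hBsub : ∀ n, ‖ContinuousLinearMap.adjoint (blkB M N T) -
        ContinuousLinearMap.adjoint (blkB M N (u n))‖ ≤ ‖u n - T‖ := by
      intro n
      rw [← LinearIsometryEquiv.map_sub, LinearIsometryEquiv.norm_map]
      have h1 : blkB M N T - blkB M N (u n) = blkB M N (T - u n) := by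
        simp only [blkB]; exact (blk_sub _ _ _ _).symm
      rw [h1, norm_sub_rev (u n) T]
      simpa only [blkB] using blk_opNorm_le Mᗮ N (T - u n)
    have hDadjsub : ∀ n, ‖ContinuousLinearMap.adjoint (blkD M N T) -
        ContinuousLinearMap.adjoint (blkD M N (u n))‖ ≤ ‖u n - T‖ := by
      intro n
      rw [← LinearIsometryEquiv.map_sub, LinearIsometryEquiv.norm_map]
      have h1 : blkD M N T - blkD M N (u n) = blkD M N (T - u n) := by
        simp only [blkD]; exact (blk_sub _ _ _ _).symm
      rw [h1, norm_sub_rev (u n) T]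
      simpa only [blkD] using blk_opNorm_le Mᗮ Nᗮ (T - u n)
    constructor
    · intro x hx
      choose y hy1 hy2 using fun n => (hu n).1 x hx
      exact psi_limit _ hlamC (blkC M N T) (blkD M N T) (fun n => blkC M N (u n))
        (fun n => blkD M N (u n)) (fun n => ‖u n - T‖) hε hCsub hDsub hDT x hx y hy1 hy2
    · intro x hx
      choose y hy1 hy2 using fun n => (hu n).2 x hx
      exact psi_limit _ hlamC (ContinuousLinearMap.adjoint (blkB M N T))
        (ContinuousLinearMap.adjoint (blkD M N T))
        (fun n => ContinuousLinearMap.adjoint (blkB M N (u n)))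
        (fun n => ContinuousLinearMap.adjoint (blkD M N (u n)))
        (fun n => ‖u n - T‖) hε hBsub hDadjsub
        (isClosed_range_adjoint_s19 _ hDT) x hx y hy1 hy2
  refine ⟨main, fun hfin => ?_⟩
  have hclosure : closure (psiSet M N lam) ⊆ psiSet M N lam := by
    intro T hT
    refine main T hT ?_
    haveI : FiniteDimensional ℂ (Nᗮ : Submodule ℂ K) := inferInstance
    have : Set.range (blkD M N T) = ((LinearMap.range (blkD M N T : Mᗮ →ₗ[ℂ] Nᗮ) : Submodule ℂ Nᗮ) : Set Nᗮ) :=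
      (LinearMap.coe_range _).symm
    rw [this]
    exact Submodule.closed_of_finiteDimensional _
  exact isClosed_of_closure_subset hclosure
end
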